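/- arXiv:1211.5745 — 2 statements merged into one kernel-verified Lean document; each statement's English description precedes it below -/
import Mathlib

section
/- (Duplication formula) For all natural numbers m and n and all real t, H_{m,n}(t) = m!·n!·(1/√2)^{m+n} · Σ_{k=0}^{m} Σ_{j=0}^{n} (H_{k,j}(t/√2) / (k!·j!)) · (H_{m−k,n−j}(t/√2) / ((m−k)!·(n−j)!)). -/
open Polynomial Finset

noncomputable def A (p : ℝ[X]) : ℝ[X] := 2 * X * p - derivative p
noncomputable def H (m n : ℕ) : ℝ[X] := A^[m] (X ^ n)

lemma A_add (p q : ℝ[X]) : A (p + q) = A p + A q := by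
  simp [A]; ring

lemma A_C_mul (r : ℝ) (p : ℝ[X]) : A (C r * p) = C r * A p := by
  simp [A]; ring

lemma iter_A_C_mul (m : ℕ) (r : ℝ) (p : ℝ[X]) : A^[m] (C r * p) = C r * A^[m] p := by
  induction m with
  | zero => simp
  | succ m ih =>
    rw [Function.iterate_succ_apply', ih, A_C_mul,
      (Function.iterate_succ_apply' A m p).symm]

lemma deriv_A (p : ℝ[X]) : derivative (A p) = A (derivative p) + 2 * p := by
  simp [A]; ring

lemma deriv_iterA (m : ℕ) (p : ℝ[X]) :
    derivative (A^[m] p) = A^[m] (derivative p) + C (2*(m:ℝ)) * A^[m - 1] p := by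
  induction m generalizing p with
  | zero => simp
  | succ m ih =>
    rw [Function.iterate_succ_apply', deriv_A, ih, Nat.add_sub_cancel]
    rw [A_add, A_C_mul]
    rw [(Function.iterate_succ_apply' A m (derivative p)).symm]
    rcases m with _ | M
    · have : C (2*((0+1:ℕ):ℝ)) = 2 := by
        rw [show (2:ℝ[X]) = C 2 from (map_ofNat C 2).symm]
        norm_num
      rw [this]; norm_num
    · rw [Nat.add_sub_cancel, (Function.iterate_succ_apply' A M p).symm]
      have : C (2*((M+1+1:ℕ):ℝ)) = C (2*((M+1:ℕ):ℝ)) + 2 := by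
        rw [show (2:ℝ[X]) = C 2 from (map_ofNat C 2).symm, ← C_add]
        push_cast; ring_nf
      rw [this]; ring

lemma A_X_mul (p : ℝ[X]) : A (X * p) = X * A p - p := by
  simp [A]; ring

lemma iterA_X_mul (m : ℕ) (p : ℝ[X]) :
    A^[m] (X * p) = X * A^[m] p - C (m:ℝ) * A^[m-1] p := by
  induction m generalizing p with
  | zero => simp
  | succ m ih =>
    rw [Function.iterate_succ_apply', ih, Nat.add_sub_cancel]
    have : A (X * A^[m] p - C (m:ℝ) * A^[m-1] p)
        = (X * A (A^[m] p) - A^[m] p) - C (m:ℝ) * A (A^[m-1] p) := by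
      have hsub : ∀ p q : ℝ[X], A (p - q) = A p - A q := by intro p q; simp [A]; ring
      rw [hsub, A_X_mul, A_C_mul]
    rw [this, (Function.iterate_succ_apply' A m p).symm]
    rcases m with _ | M
    · simp
    · rw [Nat.add_sub_cancel, (Function.iterate_succ_apply' A M p).symm]
      have : C (((M+1+1:ℕ)):ℝ) = C (((M+1:ℕ)):ℝ) + 1 := by
        rw [show (1:ℝ[X]) = C 1 from C_1.symm, ← C_add]
        push_cast; ring_nf
      rw [this]; ring

lemma H_rec1 (m n : ℕ) : H (m+1) n = 2*X*(H m n) - derivative (H m n) := by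
  rw [H, Function.iterate_succ_apply']; rfl

lemma H_deriv (m n : ℕ) :
    derivative (H m n) = C (n:ℝ) * H m (n-1) + C (2*(m:ℝ)) * H (m-1) n := by
  rw [H, deriv_iterA, derivative_X_pow, iter_A_C_mul]; rfl

lemma H_rec2 (m n : ℕ) : H m (n+1) = X * H m n - C (m:ℝ) * H (m-1) n := by
  rw [H, pow_succ, mul_comm, iterA_X_mul]; rfl

lemma r1 (x : ℝ) (m n : ℕ) :
    (H (m+1) n).eval x = 2*x*(H m n).eval x - (n:ℝ) * (H m (n-1)).eval x
      - 2*(m:ℝ)*(H (m-1) n).eval x := by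
  rw [H_rec1]; simp [H_deriv]; ring

lemma r2 (x : ℝ) (m n : ℕ) :
    (H m (n+1)).eval x = x * (H m n).eval x - (m:ℝ) * (H (m-1) n).eval x := by
  rw [H_rec2]; simp

noncomputable def c (x : ℝ) (m n : ℕ) : ℝ :=
  (H m n).eval x / ((m.factorial : ℝ) * (n.factorial : ℝ))

noncomputable def Cc (x : ℝ) (m n : ℕ) : ℝ :=
  ∑ k ∈ range (m+1), ∑ j ∈ range (n+1), c x k j * c x (m-k) (n-j)

lemma crec2' (x : ℝ) (m j : ℕ) :
    ((j:ℝ)+1) * c x m (j+1) = x * c x m j - (if m = 0 then 0 else c x (m-1) j) := by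
  have hfj : ((j.factorial : ℝ)) ≠ 0 := Nat.cast_ne_zero.mpr (Nat.factorial_ne_zero _)
  rcases m with _ | M
  · simp only [if_pos rfl, c, r2, Nat.factorial_succ, Nat.factorial_zero]
    push_cast
    field_simp
    try ring
  · simp only [if_neg (Nat.succ_ne_zero M), c, r2, Nat.factorial_succ, Nat.add_sub_cancel]
    have hfM : ((M.factorial : ℝ)) ≠ 0 := Nat.cast_ne_zero.mpr (Nat.factorial_ne_zero _)
    push_cast
    field_simp
    try ring

lemma crec1' (x : ℝ) (k j : ℕ) :
    ((k:ℝ)+1) * c x (k+1) j =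
      2*x*c x k j - (if j = 0 then 0 else c x k (j-1))
        - 2*(if k = 0 then 0 else c x (k-1) j) := by
  have hfj : ((j.factorial : ℝ)) ≠ 0 := Nat.cast_ne_zero.mpr (Nat.factorial_ne_zero _)
  have hfk : ((k.factorial : ℝ)) ≠ 0 := Nat.cast_ne_zero.mpr (Nat.factorial_ne_zero _)
  rcases k with _ | K <;> rcases j with _ | J
  · simp only [if_pos rfl, c, r1, Nat.factorial_succ, Nat.factorial_zero]
    push_cast
    field_simp
    try ring
  · simp only [if_pos rfl, if_neg (Nat.succ_ne_zero J), c, r1, Nat.factorial_succ,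
      Nat.factorial_zero, Nat.add_sub_cancel]
    have hfJ : ((J.factorial : ℝ)) ≠ 0 := Nat.cast_ne_zero.mpr (Nat.factorial_ne_zero _)
    push_cast
    field_simp
    try ring
  · simp only [if_pos rfl, if_neg (Nat.succ_ne_zero K), c, r1, Nat.factorial_succ,
      Nat.factorial_zero, Nat.add_sub_cancel]
    have hfK : ((K.factorial : ℝ)) ≠ 0 := Nat.cast_ne_zero.mpr (Nat.factorial_ne_zero _)
    push_cast
    field_simp
    try ring
  · simp only [if_neg (Nat.succ_ne_zero K), if_neg (Nat.succ_ne_zero J), c, r1,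
      Nat.factorial_succ, Nat.add_sub_cancel]
    have hfK : ((K.factorial : ℝ)) ≠ 0 := Nat.cast_ne_zero.mpr (Nat.factorial_ne_zero _)
    have hfJ : ((J.factorial : ℝ)) ≠ 0 := Nat.cast_ne_zero.mpr (Nat.factorial_ne_zero _)
    push_cast
    field_simp
    try ring

lemma Cv (x : ℝ) (m n : ℕ) :
    ((n:ℝ)+1) * Cc x m (n+1) =
      2*x*Cc x m n - 2 * ∑ k ∈ range m, ∑ j ∈ range (n+1), c x k j * c x (m-1-k) (n-j) := by
  have h1 : ((n:ℝ)+1) * Cc x m (n+1)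
      = (∑ k ∈ range (m+1), ∑ j ∈ range (n+2), (j:ℝ) * (c x k j * c x (m-k) (n+1-j)))
      + ∑ k ∈ range (m+1), ∑ j ∈ range (n+2), (((n+1-j:ℕ)):ℝ) * (c x k j * c x (m-k) (n+1-j)) := by
    rw [Cc, mul_sum, ← sum_add_distrib]
    refine sum_congr rfl fun k _ => ?_
    rw [mul_sum, ← sum_add_distrib]
    refine sum_congr rfl fun j hj => ?_
    have hj' : j ≤ n+1 := Nat.lt_succ_iff.mp (mem_range.mp hj)
    have hc : (((n+1-j:ℕ)):ℝ) = (n:ℝ)+1-(j:ℝ) := by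
      rw [Nat.cast_sub hj']; push_cast; ring
    rw [hc]; ring
  have h2 : (∑ k ∈ range (m+1), ∑ j ∈ range (n+2), (((n+1-j:ℕ)):ℝ) * (c x k j * c x (m-k) (n+1-j)))
      = ∑ k ∈ range (m+1), ∑ j ∈ range (n+2), (j:ℝ) * (c x k j * c x (m-k) (n+1-j)) := by
    rw [← Finset.sum_range_reflect]
    refine sum_congr rfl fun k hk => ?_
    rw [← Finset.sum_range_reflect]
    refine sum_congr rfl fun j hj => ?_
    have hk' : k ≤ m := Nat.lt_succ_iff.mp (mem_range.mp hk)
    have hj' : j ≤ n+1 := Nat.lt_succ_iff.mp (mem_range.mp hj)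
    have e1 : m + 1 - 1 - k = m - k := by omega
    have e2 : n + 2 - 1 - j = n + 1 - j := by omega
    have e3 : n + 1 - (n + 1 - j) = j := by omega
    have e4 : m - (m - k) = k := by omega
    rw [e1, e2, e3, e4]
    ring
  have h3 : (∑ k ∈ range (m+1), ∑ j ∈ range (n+2), (j:ℝ) * (c x k j * c x (m-k) (n+1-j)))
      = x * Cc x m n
        - ∑ k ∈ range (m+1), ∑ j ∈ range (n+1),
            (if k = 0 then 0 else c x (k-1) j) * c x (m-k) (n-j) := by
    rw [Cc, mul_sum, ← sum_sub_distrib]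
    refine sum_congr rfl fun k _ => ?_
    rw [Finset.sum_range_succ']
    simp only [Nat.cast_zero, zero_mul, add_zero]
    rw [mul_sum, ← sum_sub_distrib]
    refine sum_congr rfl fun j hj => ?_
    have h := crec2' x k j
    have e : n + 1 - (j+1) = n - j := by omega
    rw [e]
    push_cast
    linear_combination (c x (m-k) (n-j)) * h
  have h4 : (∑ k ∈ range (m+1), ∑ j ∈ range (n+1),
        (if k = 0 then 0 else c x (k-1) j) * c x (m-k) (n-j))
      = ∑ k ∈ range m, ∑ j ∈ range (n+1), c x k j * c x (m-1-k) (n-j) := by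
    rw [Finset.sum_range_succ']
    simp only [if_pos rfl, if_true, zero_mul, sum_const_zero, add_zero]
    refine sum_congr rfl fun k _ => ?_
    refine sum_congr rfl fun j _ => ?_
    simp only [if_neg (Nat.succ_ne_zero k), Nat.add_sub_cancel]
    have e : m - (k+1) = m - 1 - k := by omega
    rw [e]
  rw [h1, h2, h3, h4]
  ring

lemma Cc_zero (x : ℝ) (M : ℕ) : Cc x M 0 = ∑ k ∈ range (M+1), c x k 0 * c x (M-k) 0 := by
  simp [Cc]

lemma Cu0 (x : ℝ) (m : ℕ) :
    ((m:ℝ)+1) * Cc x (m+1) 0 =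
      4*x*Cc x m 0 - 4 * ∑ k ∈ range m, c x k 0 * c x (m-1-k) 0 := by
  rw [Cc_zero, Cc_zero]
  have h1 : ((m:ℝ)+1) * ∑ k ∈ range (m+2), c x k 0 * c x (m+1-k) 0
      = (∑ k ∈ range (m+2), (k:ℝ) * (c x k 0 * c x (m+1-k) 0))
      + ∑ k ∈ range (m+2), (((m+1-k:ℕ)):ℝ) * (c x k 0 * c x (m+1-k) 0) := by
    rw [mul_sum, ← sum_add_distrib]
    refine sum_congr rfl fun k hk => ?_
    have hk' : k ≤ m+1 := Nat.lt_succ_iff.mp (mem_range.mp hk)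
    have hc : (((m+1-k:ℕ)):ℝ) = (m:ℝ)+1-(k:ℝ) := by
      rw [Nat.cast_sub hk']; push_cast; ring
    rw [hc]; ring
  have h2 : (∑ k ∈ range (m+2), (((m+1-k:ℕ)):ℝ) * (c x k 0 * c x (m+1-k) 0))
      = ∑ k ∈ range (m+2), (k:ℝ) * (c x k 0 * c x (m+1-k) 0) := by
    rw [← Finset.sum_range_reflect]
    refine sum_congr rfl fun k hk => ?_
    have hk' : k ≤ m+1 := Nat.lt_succ_iff.mp (mem_range.mp hk)
    have e2 : m + 2 - 1 - k = m + 1 - k := by omega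
    have e3 : m + 1 - (m + 1 - k) = k := by omega
    rw [e2, e3]
    ring
  have h3 : (∑ k ∈ range (m+2), (k:ℝ) * (c x k 0 * c x (m+1-k) 0))
      = 2*x*(∑ k ∈ range (m+1), c x k 0 * c x (m-k) 0)
        - 2 * ∑ k ∈ range (m+1), (if k = 0 then 0 else c x (k-1) 0) * c x (m-k) 0 := by
    rw [mul_sum, mul_sum, ← sum_sub_distrib, Finset.sum_range_succ']
    simp only [Nat.cast_zero, zero_mul, add_zero]
    refine sum_congr rfl fun k hk => ?_
    have h := crec1' x k 0
    simp only [if_pos rfl, if_true, sub_zero] at h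
    have e : m + 1 - (k+1) = m - k := by omega
    rw [e]
    push_cast
    linear_combination (c x (m-k) 0) * h
  have h4 : (∑ k ∈ range (m+1), (if k = 0 then 0 else c x (k-1) 0) * c x (m-k) 0)
      = ∑ k ∈ range m, c x k 0 * c x (m-1-k) 0 := by
    rw [Finset.sum_range_succ']
    simp only [if_pos rfl, if_true, zero_mul, sum_const_zero, add_zero]
    refine sum_congr rfl fun k _ => ?_
    simp only [if_neg (Nat.succ_ne_zero k), Nat.add_sub_cancel]
    have e : m - (k+1) = m - 1 - k := by omega
    rw [e]
  rw [h1, h2, h3, h4]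
  ring

lemma key (u s : ℝ) (hu : u * u = 2) (M : ℕ) :
    ∀ N : ℕ, u^(M+N) * (H M N).eval (u*s)
      = (M.factorial : ℝ) * (N.factorial : ℝ) * Cc s M N := by
  induction M using Nat.strong_induction_on with
  | _ M ih =>
  intro N
  induction N with
  | zero =>
    rcases M with _ | M'
    · simp [H, Cc, c]
    · have hne : ((M':ℝ)+1) ≠ 0 := by positivity
      apply mul_left_cancel₀ hne
      have hr1 := r1 (u*s) M' 0
      simp only [CharP.cast_eq_zero, zero_mul, sub_zero] at hr1
      rw [hr1]
      have hcu := Cu0 s M'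
      have hP := ih M' (by omega) 0
      rcases M' with _ | M''
      · simp only [range_zero, sum_empty, mul_zero, sub_zero] at hcu
        push_cast [Nat.factorial_succ, Nat.factorial_zero] at hP hcu ⊢
        linear_combination (2*s*u*u) * hP - hcu + (2*s*(Cc s 0 0)) * hu
      · have hQ := ih M'' (by omega) 0
        have hSig : (∑ k ∈ range (M''+1), c s k 0 * c s (M''+1-1-k) 0) = Cc s M'' 0 := by
          rw [Cc_zero]
          refine sum_congr rfl fun k _ => ?_
          have e : M''+1-1-k = M''-k := by omega
          rw [e]
        rw [hSig] at hcu
        simp only [Nat.add_sub_cancel]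
        push_cast [Nat.factorial_succ, Nat.factorial_zero] at hP hQ hcu ⊢
        linear_combination (2*((M'':ℝ)+1+1)*s*u*u) * hP
          - (2*((M'':ℝ)+1+1)*((M'':ℝ)+1)*u*u) * hQ
          - (((M'':ℝ)+1+1)*((M'':ℝ)+1)*(M''.factorial:ℝ)) * hcu
          + (2*((M'':ℝ)+1+1)*((M'':ℝ)+1)*(M''.factorial:ℝ)*s*(Cc s (M''+1) 0)
             - 2*((M'':ℝ)+1+1)*((M'':ℝ)+1)*(M''.factorial:ℝ)*(Cc s M'' 0)) * hu
  | succ N ihN =>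
    have hr2 := r2 (u*s) M N
    have hcv := Cv s M N
    have hneN : ((N:ℝ)+1) ≠ 0 := by positivity
    apply mul_left_cancel₀ hneN
    rw [hr2]
    rcases M with _ | M'
    · simp only [range_zero, sum_empty, mul_zero, sub_zero] at hcv
      push_cast [Nat.factorial_succ, Nat.factorial_zero] at ihN hcv ⊢
      linear_combination (((N:ℝ)+1)*s*u*u) * ihN
        - (((N:ℝ)+1)*(N.factorial:ℝ)) * hcv
        + (((N:ℝ)+1)*s*(N.factorial:ℝ)*(Cc s 0 N)) * hu
    · have hQ := ih M' (by omega) N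
      have hSig : (∑ k ∈ range (M'+1), ∑ j ∈ range (N+1), c s k j * c s (M'+1-1-k) (N-j))
          = Cc s M' N := by
        rw [Cc]
        refine sum_congr rfl fun k _ => ?_
        refine sum_congr rfl fun j _ => ?_
        have e : M'+1-1-k = M'-k := by omega
        rw [e]
      rw [hSig] at hcv
      simp only [Nat.add_sub_cancel]
      push_cast [Nat.factorial_succ, Nat.factorial_zero] at ihN hQ hcv ⊢
      linear_combination (((N:ℝ)+1)*s*u*u) * ihN
        - (((N:ℝ)+1)*((M':ℝ)+1)*u*u) * hQ
        - (((M':ℝ)+1)*(M'.factorial:ℝ)*((N:ℝ)+1)*(N.factorial:ℝ)) * hcv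
        + (((N:ℝ)+1)*s*((M':ℝ)+1)*(M'.factorial:ℝ)*(N.factorial:ℝ)*(Cc s (M'+1) N)
           - ((N:ℝ)+1)*((M':ℝ)+1)*(M'.factorial:ℝ)*(N.factorial:ℝ)*(Cc s M' N)) * hu

theorem hmn_duplication (m n : ℕ) (t : ℝ) :
    (H m n).eval t =
      (m.factorial : ℝ) * (n.factorial : ℝ) * (1 / Real.sqrt 2) ^ (m + n) *
        ∑ k ∈ range (m + 1), ∑ j ∈ range (n + 1),
          ((H k j).eval (t / Real.sqrt 2) / ((k.factorial : ℝ) * (j.factorial : ℝ))) *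
            ((H (m - k) (n - j)).eval (t / Real.sqrt 2) /
              (((m - k).factorial : ℝ) * ((n - j).factorial : ℝ))) := by
  have h2 : (0:ℝ) < Real.sqrt 2 := Real.sqrt_pos.mpr (by norm_num)
  have hu : Real.sqrt 2 * Real.sqrt 2 = 2 := Real.mul_self_sqrt (by norm_num)
  have hne : Real.sqrt 2 ≠ 0 := ne_of_gt h2
  have hts : Real.sqrt 2 * (t / Real.sqrt 2) = t := by field_simp
  have hk := key (Real.sqrt 2) (t / Real.sqrt 2) hu m n
  rw [hts] at hk
  have hpow : (Real.sqrt 2)^(m+n) ≠ 0 := pow_ne_zero _ hne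
  have hmain : (H m n).eval t
      = (m.factorial:ℝ)*(n.factorial:ℝ)*(1/Real.sqrt 2)^(m+n) * Cc (t/Real.sqrt 2) m n := by
    rw [one_div, inv_pow]
    field_simp
    linear_combination hk
  rw [hmain]
  simp only [Cc, c]
end

section
/- (Derivative recurrence) For all natural numbers m ≥ 1 and n ≥ 1 and all real x, H_{m,n}′(x) = 2m·H_{m−1,n}(x) + n·H_{m,n−1}(x), where H_{m,n}′ denotes the derivative of the polynomial H_{m,n}. -/
open Polynomial Finset

lemma A_smul (c : ℝ) (p : ℝ[X]) : A (C c * p) = C c * A p := by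
  simp [A, derivative_mul]; ring

lemma A_deriv (p : ℝ[X]) : derivative (A p) = 2 * p + A (derivative p) := by
  simp [A, derivative_mul]; ring

lemma A_iter_smul (m : ℕ) (c : ℝ) (p : ℝ[X]) : A^[m] (C c * p) = C c * A^[m] p := by
  induction m with
  | zero => simp
  | succ k ih => rw [Function.iterate_succ_apply', ih, A_smul, Function.iterate_succ_apply']

lemma key_s16 (m : ℕ) (hm : 1 ≤ m) (p : ℝ[X]) :
    derivative (A^[m] p) = C (2 * (m : ℝ)) * A^[m - 1] p + A^[m] (derivative p) := by
  induction m, hm using Nat.le_induction with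
  | base =>
    simp only [Function.iterate_one, Function.iterate_zero, id_eq, A_deriv,
      Nat.cast_one, mul_one, Nat.sub_self]
    rw [show (C 2 : ℝ[X]) = 2 from map_ofNat C 2]
  | succ k hk ih =>
    have h : A (A^[k - 1] p) = A^[k] p := by
      rw [← Function.iterate_succ_apply' A (k-1) p, show (k-1).succ = k by omega]
    rw [Function.iterate_succ_apply', A_deriv, ih, A_add, A_smul, h,
      ← Function.iterate_succ_apply' A k]
    push_cast
    rw [show (C (2 * ((k : ℝ) + 1)) : ℝ[X]) = C (2 * (k : ℝ)) + 2 by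
      rw [show (2 * ((k : ℝ) + 1)) = 2 * (k : ℝ) + 2 by ring, C_add,
        show (C 2 : ℝ[X]) = 2 from map_ofNat C 2]]
    ring

theorem hmn_derivative_rec (m n : ℕ) (hm : 1 ≤ m) (hn : 1 ≤ n) (x : ℝ) :
    (derivative (H m n)).eval x =
      2 * (m : ℝ) * (H (m - 1) n).eval x + (n : ℝ) * (H m (n - 1)).eval x := by
  have hd : derivative (X ^ n : ℝ[X]) = C (n : ℝ) * X ^ (n - 1) := by
    rw [derivative_X_pow]
  rw [H, key_s16 m hm, hd, A_iter_smul]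
  simp [H]
end
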